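/- arXiv:2401.13237 — 2 statements merged into one kernel-verified Lean document; each statement's English description precedes it below -/
import Mathlib

section
/- For each fixed t > 0 with t ≠ 1, the function β ↦ g_β(t) := (1 - 1/β)(1 - t^β)/(1 - t^{β-1}), defined for β ∉ {0,1}, is monotonically increasing in β. -/
/-
Write `L = log t` and `ψ(u) = ∫₀¹ e^{su} ds = (e^u - 1)/u`; then `g_β(t) = ψ(βL) / ψ((β-1)L)`.
`ψ` is the moment generating function of the uniform distribution on `[0, 1]`, so `K = log ψ` is
a cumulant generating function, which is convex (its second derivative is a variance). Hence
the increment `K(u + |L|) - K(u)` is nondecreasing in `u`, and `log g_β(t) = K(βL) - K(βL - L)`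
is such an increment at `u = βL - L` if `L > 0`, and minus one at `u = βL` if `L < 0`; either
way it increases with `β`.
-/

open Real

/-- `g β t = f_{1/β}(t)`, the reparametrized Petz function. -/
noncomputable def gBeta (β t : ℝ) : ℝ := (1 - 1 / β) * (1 - t ^ β) / (1 - t ^ (β - 1))

open MeasureTheory ProbabilityTheory Set

theorem ConvexOn.map_add_sub_le_map_add_sub {𝕜 : Type*} [Field 𝕜] [LinearOrder 𝕜]
    [IsStrictOrderedRing 𝕜] {s : Set 𝕜} {f : 𝕜 → 𝕜} (hf : ConvexOn 𝕜 s f) {x y c : 𝕜}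
    (hx : x ∈ s) (hyc : y + c ∈ s) (hxy : x ≤ y) (hc : 0 ≤ c) :
    f (x + c) - f x ≤ f (y + c) - f y := by
  rcases hc.eq_or_lt with rfl | hc
  · simp
  have hxc : x + c ∈ s := hf.1.ordConnected.out hx hyc ⟨by linarith, by linarith⟩
  have hy : y ∈ s := hf.1.ordConnected.out hx hyc ⟨hxy, by linarith⟩
  have hleft : (f (x + c) - f x) / c ≤ (f (y + c) - f x) / (y + c - x) := by
    simpa using hf.secant_mono hx hxc hyc (by linarith) (by linarith) (by linarith)
  have hright : (f (y + c) - f x) / (y + c - x) ≤ (f (y + c) - f y) / c := by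
    have := hf.secant_mono hyc hx hy (by linarith) (by linarith) hxy
    rwa [← neg_div_neg_eq, neg_sub, neg_sub, sub_add_cancel_left, div_neg, ← neg_div,
      neg_sub] at this
  exact (div_le_div_iff_of_pos_right hc).1 (hleft.trans hright)

theorem convexOn_cgf {Ω : Type*} {m : MeasurableSpace Ω} {X : Ω → ℝ} {μ : Measure Ω} :
    ConvexOn ℝ (interior (integrableExpSet X μ)) (cgf X μ) := by
  refine convexOn_of_deriv2_nonneg' convex_integrableExpSet.interior
    analyticOnNhd_cgf.differentiableOn analyticOnNhd_cgf.deriv.differentiableOn fun v hv => ?_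
  rw [← iteratedDeriv_eq_iterate, iteratedDeriv_two_cgf_eq_integral hv]
  exact div_nonneg (integral_nonneg fun ω => by positivity) mgf_nonneg

theorem integrable_exp_mul_restrict_Ioc (u a b : ℝ) :
    Integrable (fun x => exp (u * x)) (volume.restrict (Ioc a b)) :=
  (continuous_const.mul continuous_id).rexp.integrableOn_Ioc

theorem convexOn_cgf_id_restrict_Ioc (a b : ℝ) :
    ConvexOn ℝ univ (cgf id (volume.restrict (Ioc a b))) := by
  have : integrableExpSet id (volume.restrict (Ioc a b)) = univ :=
    eq_univ_of_forall fun u => integrable_exp_mul_restrict_Ioc u a b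
  simpa [this] using convexOn_cgf (X := id) (μ := volume.restrict (Ioc a b))

theorem mgf_id_restrict_Ioc_zero_one {u : ℝ} (hu : u ≠ 0) :
    mgf id (volume.restrict (Ioc (0 : ℝ) 1)) u = (exp u - 1) / u := by
  rw [mgf, ← intervalIntegral.integral_of_le zero_le_one]
  simp only [id]
  rw [intervalIntegral.integral_comp_mul_left (fun x => exp x) hu]
  simp [integral_exp, div_eq_inv_mul]

theorem gBeta_eq_exp_cgf {t β : ℝ} (ht : 0 < t) (ht1 : t ≠ 1) (hβ₀ : β ≠ 0) (hβ₁ : β ≠ 1) :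
    gBeta β t = exp (cgf id (volume.restrict (Ioc (0 : ℝ) 1)) (β * log t) -
      cgf id (volume.restrict (Ioc (0 : ℝ) 1)) ((β - 1) * log t)) := by
  have hL : log t ≠ 0 := log_ne_zero_of_pos_of_ne_one ht ht1
  have hβL : β * log t ≠ 0 := mul_ne_zero hβ₀ hL
  have hβL' : (β - 1) * log t ≠ 0 := mul_ne_zero (sub_ne_zero.2 hβ₁) hL
  have : NeZero (volume.restrict (Ioc (0 : ℝ) 1)) := ⟨by simp⟩
  have hpow : ∀ s, exp (s * log t) = t ^ s := fun s => by rw [rpow_def_of_pos ht, mul_comm]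
  have hne : t ^ (β - 1) - 1 ≠ 0 := by rwa [← hpow, sub_ne_zero, Ne, exp_eq_one_iff]
  have hne' : 1 - t ^ (β - 1) ≠ 0 := fun h => hne (by linarith)
  rw [exp_sub, exp_cgf (X := id) (integrable_exp_mul_restrict_Ioc _ 0 1),
    exp_cgf (X := id) (integrable_exp_mul_restrict_Ioc _ 0 1), mgf_id_restrict_Ioc_zero_one hβL,
    mgf_id_restrict_Ioc_zero_one hβL', hpow, hpow, gBeta]
  field_simp
  ring

theorem gBeta_monotone_in_beta (t : ℝ) (ht : 0 < t) (ht1 : t ≠ 1) :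
    ∀ β₁ β₂ : ℝ, β₁ ≠ 0 → β₁ ≠ 1 → β₂ ≠ 0 → β₂ ≠ 1 → β₁ ≤ β₂ →
      gBeta β₁ t ≤ gBeta β₂ t := by
  intro β₁ β₂ hβ₁₀ hβ₁₁ hβ₂₀ hβ₂₁ hβ
  rw [gBeta_eq_exp_cgf ht ht1 hβ₁₀ hβ₁₁, gBeta_eq_exp_cgf ht ht1 hβ₂₀ hβ₂₁, exp_le_exp,
    sub_one_mul, sub_one_mul]
  have hK := convexOn_cgf_id_restrict_Ioc 0 1
  rcases (log_ne_zero_of_pos_of_ne_one ht ht1).lt_or_gt with hL | hL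
  · have := hK.map_add_sub_le_map_add_sub (mem_univ _) (mem_univ _)
      (mul_le_mul_of_nonpos_right hβ hL.le) (neg_nonneg.2 hL.le)
    simp only [← sub_eq_add_neg] at this
    linarith
  · have := hK.map_add_sub_le_map_add_sub (mem_univ _) (mem_univ _)
      (sub_le_sub_right (mul_le_mul_of_nonneg_right hβ hL.le) (log t)) hL.le
    simpa only [sub_add_cancel] using this
end

section
/- For α ∈ (0, 1/2) and all t > 0 with t ≠ 1, the Petz function f_α(t) = (1-α)(1 - t^{1/α})/(1 - t^{(1-α)/α}) satisfies f_α(t) > f_{1/2}(t) = (1+t)/2, strictly exceeding the SLD Petz function. -/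
/-!
Put `b = 1/α > 2`. Then `f_α(t) - (1+t)/2 = g(t) / (2b (t^(b-1) - 1))` with
`g(t) = (b-2) t^b - b t^(b-1) + b t - (b-2)`. One has `g(1) = 0` and
`g'(t) = b ((b-2) t^(b-1) - (b-1) t^(b-2) + 1)`, which is positive for `t ≠ 1` by the weighted
AM-GM inequality. So `g` is strictly increasing on `(0, ∞)`, and `g(t)` and `t^(b-1) - 1` both have
the sign of `t - 1`.
-/

open Real Set

/-- Weighted AM-GM for `x^p` and `1` with weights `q/p` and `1 - q/p`, in strict form. -/
theorem mul_rpow_lt_mul_rpow_add_sub {p q x : ℝ} (hq : 0 < q) (hqp : q < p) (hx : 0 < x)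
    (hx1 : x ≠ 1) : p * x ^ q < q * x ^ p + (p - q) := by
  have hxq : x ^ q ≠ 1 := fun h => hx1 <| by
    simpa [← rpow_mul hx.le, mul_inv_cancel₀ hq.ne'] using congrArg (· ^ q⁻¹) h
  have bernoulli := one_add_mul_self_lt_rpow_one_add (s := x ^ q - 1)
    (by linarith [rpow_pos_of_pos hx q]) (sub_ne_zero.2 hxq) ((one_lt_div hq).2 hqp)
  rw [add_sub_cancel, ← rpow_mul hx.le, mul_div_cancel₀ _ hq.ne'] at bernoulli
  have := mul_lt_mul_of_pos_left bernoulli hq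
  rw [mul_add, ← mul_assoc, mul_div_cancel₀ _ hq.ne'] at this
  linarith

/-- The numerator of `f_{1/b} - f_{1/2}`, up to the factor `2b (t^(b-1) - 1)`. -/
noncomputable def petzGap (b t : ℝ) : ℝ :=
  (b - 2) * t ^ b - b * t ^ (b - 1) + b * t - (b - 2)

theorem hasDerivAt_petzGap (b : ℝ) {t : ℝ} (ht : 0 < t) :
    HasDerivAt (petzGap b) (b * ((b - 2) * t ^ (b - 1) - (b - 1) * t ^ (b - 2) + 1)) t := by
  have hb : HasDerivAt (fun x : ℝ => x ^ b) (b * t ^ (b - 1)) t :=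
    hasDerivAt_rpow_const (Or.inl ht.ne')
  have hb1 : HasDerivAt (fun x : ℝ => x ^ (b - 1)) ((b - 1) * t ^ (b - 2)) t := by
    simpa [sub_sub, one_add_one_eq_two] using hasDerivAt_rpow_const (p := b - 1) (Or.inl ht.ne')
  have h := (((hb.const_mul (b - 2)).sub (hb1.const_mul b)).add
    ((hasDerivAt_id t).const_mul b)).sub_const (b - 2)
  exact h.congr_deriv (by ring)

theorem petzGap_one (b : ℝ) : petzGap b 1 = 0 := by
  simp only [petzGap, one_rpow]
  ring

theorem strictMonoOn_petzGap {b : ℝ} (hb : 2 < b) : StrictMonoOn (petzGap b) (Ioi 0) := by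
  have hderiv : ∀ x, 0 < x → x ≠ 1 → 0 < deriv (petzGap b) x := fun x hx hx1 => by
    rw [(hasDerivAt_petzGap b hx).deriv]
    have := mul_rpow_lt_mul_rpow_add_sub (p := b - 1) (q := b - 2) (by linarith) (by linarith)
      hx hx1
    exact mul_pos (by linarith) (by linarith)
  have hcont : ContinuousOn (petzGap b) (Ioi 0) := fun x hx =>
    (hasDerivAt_petzGap b hx).continuousAt.continuousWithinAt
  have hleft : StrictMonoOn (petzGap b) (Ioc 0 1) :=
    strictMonoOn_of_deriv_pos (convex_Ioc 0 1) (hcont.mono Ioc_subset_Ioi_self) fun x hx => by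
      rw [interior_Ioc] at hx
      exact hderiv x hx.1 hx.2.ne
  have hright : StrictMonoOn (petzGap b) (Ici 1) :=
    strictMonoOn_of_deriv_pos (convex_Ici 1)
      (hcont.mono fun _ hx => mem_Ioi.2 (zero_lt_one.trans_le hx)) fun x hx => by
      rw [interior_Ici] at hx
      exact hderiv x (zero_lt_one.trans hx) hx.ne'
  rw [← Ioc_union_Ici_eq_Ioi zero_lt_one]
  exact hleft.union hright (isGreatest_Ioc zero_lt_one) isLeast_Ici

theorem petzGap_div_rpow_sub_one_pos {b t : ℝ} (hb : 2 < b) (ht : 0 < t) (ht1 : t ≠ 1) :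
    0 < petzGap b t / (t ^ (b - 1) - 1) := by
  have hmono := strictMonoOn_petzGap hb
  have hpow : t ^ (b - 1) < 1 ↔ t < 1 := by
    simpa using rpow_lt_rpow_iff (z := b - 1) ht.le zero_le_one (by linarith)
  have hpow' : 1 < t ^ (b - 1) ↔ 1 < t := by
    simpa using rpow_lt_rpow_iff (z := b - 1) zero_le_one ht.le (by linarith)
  rcases ht1.lt_or_gt with hlt | hgt
  · have hg : petzGap b t < petzGap b 1 := hmono ht (mem_Ioi.2 one_pos) hlt
    rw [petzGap_one] at hg
    exact div_pos_of_neg_of_neg hg (by linarith [hpow.2 hlt])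
  · have hg : petzGap b 1 < petzGap b t := hmono (mem_Ioi.2 one_pos) ht hgt
    rw [petzGap_one] at hg
    exact div_pos hg (by linarith [hpow'.2 hgt])

theorem petz_sub_sld_eq {b t : ℝ} (hb : b ≠ 0) (ht : 0 < t) (ht1 : t ^ (b - 1) ≠ 1) :
    (1 - 1 / b) * (1 - t ^ b) / (1 - t ^ (b - 1)) - (1 + t) / 2 =
      petzGap b t / (t ^ (b - 1) - 1) / (2 * b) := by
  have hden : 1 - t ^ (b - 1) ≠ 0 := sub_ne_zero.2 (Ne.symm ht1)
  have hden' : t ^ (b - 1) - 1 ≠ 0 := sub_ne_zero.2 ht1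
  have hsplit : t ^ b = t ^ (b - 1) * t := by
    rw [← rpow_add_one ht.ne', sub_add_cancel]
  rw [petzGap, hsplit]
  field_simp
  ring

theorem fAlpha_gt_fSLD_of_nonmonotone (α : ℝ) (hα : α ∈ Set.Ioo (0 : ℝ) (1 / 2)) :
    ∀ t : ℝ, 0 < t → t ≠ 1 →
      (1 - α) * (1 - t ^ (1 / α)) / (1 - t ^ ((1 - α) / α)) > (1 + t) / 2 := by
  obtain ⟨hα0, hα2⟩ := hα
  intro t ht ht1
  set b := 1 / α with hb_def
  have hb : 2 < b := by rw [hb_def, lt_div_iff₀ hα0]; linarith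
  have hα_eq : α = 1 / b := by rw [hb_def, one_div_one_div]
  have hexp : (1 - α) / α = b - 1 := by rw [hb_def]; field_simp
  have hgap := petzGap_div_rpow_sub_one_pos hb ht ht1
  have hpow : t ^ (b - 1) ≠ 1 := fun h => by simp [h] at hgap
  rw [hexp, hα_eq, gt_iff_lt, ← sub_pos, petz_sub_sld_eq (by linarith) ht hpow]
  positivity
end
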